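/- Let d ≥ 1 and k ≥ 1 be integers, let E be a real inner product space of dimension d + k with its Lebesgue (Haar) measure, let F ⊆ E be a d-dimensional subspace and P the orthogonal projection onto F. Let A > 0, let V : F → ℝ be measurable such that q ↦ (1+|q|)V(q)·𝟙_{{|q| < A}}(q) belongs to L²(F), and let α, γ be reals with α − γ > k/2. Then the function x ↦ (1+|x|)^{−α+γ}(1+|Px|) V(Px) · 𝟙_{{|Px| < A}}(x) belongs to L²(E). -/

import Mathlib

/-!
Split `E = F ⊕ Fᗮ`: up to a constant, the Haar measure of `E` is the image of the product of
Haar measures on `F` and `Fᗮ`. Writing `x = q + ξ`, Pythagoras gives `|ξ| ≤ |x|`, so the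
function is dominated by `W(q) (1 + |ξ|)^{-(α-γ)}` with `W(q) = (1+|q|)V(q)𝟙_{|q|<A}`.
This is a product of an `L²(F)` function and of `(1 + |ξ|)^{-(α-γ)}`, which lies in
`L²(Fᗮ)` because `2(α - γ) > k = dim Fᗮ`.
-/

open MeasureTheory Module

theorem MeasureTheory.MemLp.of_comp_continuousLinearEquiv
    {G E β : Type*} [NormedAddCommGroup G] [NormedSpace ℝ G] [MeasurableSpace G] [BorelSpace G]
    [NormedAddCommGroup E] [NormedSpace ℝ E] [FiniteDimensional ℝ E] [MeasurableSpace E]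
    [BorelSpace E] [NormedAddCommGroup β] {p : ENNReal}
    {ν : Measure G} [ν.IsAddHaarMeasure] (μ : Measure E) [μ.IsAddHaarMeasure]
    (e : G ≃L[ℝ] E) {g : E → β} (hg : MemLp (g ∘ e) p ν) : MemLp g p μ := by
  rw [Measure.isAddLeftInvariant_eq_smul μ (ν.map e)]
  exact .smul_measure (e.toHomeomorph.toMeasurableEquiv.memLp_map_measure_iff.2 hg)
    ENNReal.coe_ne_top

theorem MeasureTheory.MemLp.mul_prod
    {X Y : Type*} [MeasurableSpace X] [MeasurableSpace Y] {μ : Measure X} {ν : Measure Y}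
    [SigmaFinite μ] [SigmaFinite ν] {p : ENNReal} (hp0 : p ≠ 0) (hptop : p ≠ ⊤)
    {f : X → ℝ} {g : Y → ℝ} (hf : MemLp f p μ) (hg : MemLp g p ν) :
    MemLp (fun z : X × Y => f z.1 * g z.2) p (μ.prod ν) := by
  have hmeas : AEStronglyMeasurable (fun z : X × Y => f z.1 * g z.2) (μ.prod ν) :=
    hf.1.comp_fst.mul hg.1.comp_snd
  rw [← integrable_norm_rpow_iff hmeas hp0 hptop]
  refine (((integrable_norm_rpow_iff hf.1 hp0 hptop).2 hf).mul_prod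
    ((integrable_norm_rpow_iff hg.1 hp0 hptop).2 hg)).congr (.of_forall fun z => ?_)
  simp only [norm_mul, Real.mul_rpow (norm_nonneg _) (norm_nonneg _)]

theorem memLp_one_add_norm_rpow_neg
    {E : Type*} [NormedAddCommGroup E] [NormedSpace ℝ E] [FiniteDimensional ℝ E]
    [MeasurableSpace E] [BorelSpace E] (μ : Measure E) [μ.IsAddHaarMeasure]
    {p : ENNReal} (hp0 : p ≠ 0) (hptop : p ≠ ⊤) {s : ℝ} (hs : finrank ℝ E < p.toReal * s) :
    MemLp (fun x : E => (1 + ‖x‖) ^ (-s)) p μ := by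
  have hmeas : AEStronglyMeasurable (fun x : E => (1 + ‖x‖) ^ (-s)) μ :=
    (by fun_prop : Measurable fun x : E => (1 + ‖x‖) ^ (-s)).aestronglyMeasurable
  rw [← integrable_norm_rpow_iff hmeas hp0 hptop]
  refine (integrable_one_add_norm hs).congr (.of_forall fun x => ?_)
  have hx : 0 ≤ 1 + ‖x‖ := by positivity
  dsimp only
  rw [Real.norm_of_nonneg (Real.rpow_nonneg hx _), ← Real.rpow_mul hx, neg_mul, mul_comm]

theorem norm_le_norm_add_of_inner_eq_zero
    {E : Type*} [NormedAddCommGroup E] [InnerProductSpace ℝ E] {x y : E}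
    (h : inner ℝ x y = 0) : ‖y‖ ≤ ‖x + y‖ := by
  refine (pow_le_pow_iff_left₀ (norm_nonneg _) (norm_nonneg _) two_ne_zero).1 ?_
  have := norm_add_sq_eq_norm_sq_add_norm_sq_real h
  nlinarith [sq_nonneg ‖x‖]

theorem one_add_norm_add_rpow_neg_le_of_inner_eq_zero
    {E : Type*} [NormedAddCommGroup E] [InnerProductSpace ℝ E] {x y : E}
    (h : inner ℝ x y = 0) {s : ℝ} (hs : 0 ≤ s) :
    (1 + ‖x + y‖) ^ (-s) ≤ (1 + ‖y‖) ^ (-s) :=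
  Real.rpow_le_rpow_of_nonpos (by positivity)
    (add_le_add_right (norm_le_norm_add_of_inner_eq_zero h) 1) (neg_nonpos.2 hs)

theorem Submodule.orthogonalProjectionOnto_add_of_mem_orthogonal
    {E : Type*} [NormedAddCommGroup E] [InnerProductSpace ℝ E] (F : Submodule ℝ E)
    [F.HasOrthogonalProjection] (q : F) {ξ : E} (hξ : ξ ∈ Fᗮ) :
    F.orthogonalProjectionOnto ((q : E) + ξ) = q := by
  rw [map_add, F.orthogonalProjectionOnto_mem_subspace_eq_self,
    F.orthogonalProjectionOnto_apply_of_mem_orthogonal hξ, add_zero]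

theorem memLp_one_add_norm_rpow_neg_mul_comp_orthogonalProjection
    {E : Type*} [NormedAddCommGroup E] [InnerProductSpace ℝ E] [FiniteDimensional ℝ E]
    [MeasurableSpace E] [BorelSpace E] (F : Submodule ℝ E) [MeasurableSpace F] [BorelSpace F]
    (μ : Measure E) [μ.IsAddHaarMeasure] {μF : Measure F} [μF.IsAddHaarMeasure]
    {p : ENNReal} (hp0 : p ≠ 0) (hptop : p ≠ ⊤) {W : F → ℝ} (hW : MemLp W p μF)
    {s : ℝ} (hs : finrank ℝ Fᗮ < p.toReal * s) :
    MemLp (fun x : E => (1 + ‖x‖) ^ (-s) * W (F.orthogonalProjectionOnto x)) p μ := by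
  let : MeasurableSpace Fᗮ := borel Fᗮ
  have : BorelSpace Fᗮ := ⟨rfl⟩
  have hs0 : 0 ≤ s := by
    have := ENNReal.toReal_pos hp0 hptop
    nlinarith [(finrank ℝ Fᗮ).cast_nonneg (α := ℝ)]
  let μK : Measure Fᗮ := (finBasis ℝ Fᗮ).addHaar
  let e : (F × Fᗮ) ≃L[ℝ] E :=
    (Submodule.prodEquivOfIsCompl F Fᗮ F.isCompl_orthogonal).toContinuousLinearEquiv
  have hcomp : (fun x : E => (1 + ‖x‖) ^ (-s) * W (F.orthogonalProjectionOnto x)) ∘ e =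
      fun z => (1 + ‖(z.1 : E) + z.2‖) ^ (-s) * W z.1 := by
    ext z
    exact congrArg (_ * W ·) (F.orthogonalProjectionOnto_add_of_mem_orthogonal z.1 z.2.2)
  refine MemLp.of_comp_continuousLinearEquiv (ν := μF.prod μK) μ e ?_
  rw [hcomp]
  refine (hW.mul_prod hp0 hptop (memLp_one_add_norm_rpow_neg μK hp0 hptop hs)).of_le
    ((by fun_prop : Measurable fun z : F × Fᗮ => (1 + ‖(z.1 : E) + z.2‖) ^ (-s))
      |>.aestronglyMeasurable.mul hW.1.comp_fst) (.of_forall fun z => ?_)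
  rw [norm_mul, norm_mul, mul_comm ‖W z.1‖, Real.norm_of_nonneg (by positivity),
    Real.norm_of_nonneg (Real.rpow_nonneg (by positivity) _)]
  exact mul_le_mul_of_nonneg_right (one_add_norm_add_rpow_neg_le_of_inner_eq_zero
    (Submodule.inner_right_of_mem_orthogonal z.1.2 z.2.2) hs0) (norm_nonneg (W z.1))

theorem near_region_L2_estimate_general
    {E : Type*} [NormedAddCommGroup E] [InnerProductSpace ℝ E]
    [FiniteDimensional ℝ E] [MeasurableSpace E] [BorelSpace E]
    (d k : ℕ) (hdim : Module.finrank ℝ E = d + k)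
    (F : Submodule ℝ E) (hF : Module.finrank ℝ F = d)
    [MeasurableSpace F] [BorelSpace F]
    (μ : Measure E) [μ.IsAddHaarMeasure]
    (μF : Measure F) [μF.IsAddHaarMeasure]
    (A : ℝ)
    (V : F → ℝ)
    (hVloc : MemLp ({q : F | ‖q‖ < A}.indicator fun q => (1 + ‖q‖) * V q) 2 μF)
    (α γ : ℝ) (hαγ : (k : ℝ) / 2 < α - γ) :
    MemLp
      ({x : E | ‖(F.orthogonalProjectionOnto x : E)‖ < A}.indicator fun x =>
        (1 + ‖x‖) ^ (-α + γ) * (1 + ‖(F.orthogonalProjectionOnto x : E)‖) *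
          V (F.orthogonalProjectionOnto x))
      2 μ := by
  have hK : finrank ℝ Fᗮ = k := by
    have := F.finrank_add_finrank_orthogonal
    omega
  have hs : (finrank ℝ Fᗮ : ℝ) < (2 : ENNReal).toReal * (α - γ) := by
    rw [hK, ENNReal.toReal_ofNat]
    linarith
  convert memLp_one_add_norm_rpow_neg_mul_comp_orthogonalProjection F μ two_ne_zero
    ENNReal.ofNat_ne_top hVloc hs using 1
  ext x
  simp only [Set.indicator_apply, Set.mem_ofPred_eq, Submodule.norm_coe, sub_eq_add_neg,
    neg_add, neg_neg, mul_ite, mul_zero, mul_assoc]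

/-- the near-region `L²` estimate in the proof of Proposition 1 of the
paper: `E` a real inner product space of dimension `d + k` (`d, k ≥ 1`) with Haar
measure `μ`, `F` a `d`-dimensional subspace with orthogonal projection `P` and Haar
measure `μF`, and `V : F → ℝ` measurable with `(1+|q|)V(q)𝟙_{|q|<A} ∈ L²(F)`.  Then for
all reals `α, γ` with `α - γ > k/2`, the function
`(1+|x|)^{-α+γ}(1+|Px|) V(Px) 𝟙_{|Px| < A}` belongs to `L²(E)`. -/
theorem near_region_L2_estimate
    {E : Type*} [NormedAddCommGroup E] [InnerProductSpace ℝ E]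
    [FiniteDimensional ℝ E] [MeasurableSpace E] [BorelSpace E]
    (d k : ℕ) (hd : 1 ≤ d) (hk : 1 ≤ k) (hdim : Module.finrank ℝ E = d + k)
    (F : Submodule ℝ E) (hF : Module.finrank ℝ F = d)
    [MeasurableSpace F] [BorelSpace F]
    (μ : Measure E) [μ.IsAddHaarMeasure]
    (μF : Measure F) [μF.IsAddHaarMeasure]
    (A : ℝ) (hA : 0 < A)
    (V : F → ℝ) (hVmeas : Measurable V)
    (hVloc : MemLp ({q : F | ‖q‖ < A}.indicator fun q => (1 + ‖q‖) * V q) 2 μF)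
    (α γ : ℝ) (hαγ : (k : ℝ) / 2 < α - γ) :
    MemLp
      ({x : E | ‖(F.orthogonalProjectionOnto x : E)‖ < A}.indicator fun x =>
        (1 + ‖x‖) ^ (-α + γ) * (1 + ‖(F.orthogonalProjectionOnto x : E)‖) *
          V (F.orthogonalProjectionOnto x))
      2 μ :=
  near_region_L2_estimate_general d k hdim F hF μ μF A V hVloc α γ hαγ
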